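/- For every well-tempered scoring game G there exist games G^+ and G^- with gap_0(G^±) = 0 such that G ≈_+ G^+ and G ≈_- G^-; moreover G^+ ≳ G^-. If G takes all its final scores in a set S ⊆ ℤ, then G^+ and G^- can be chosen S-valued. -/

import Mathlib

/-- Well-tempered scoring game trees: an integer (final score) or a position
with lists of Left and Right options. -/
inductive WT : Type where
  | int : ℤ → WT
  | node : List WT → List WT → WT

namespace WT

/-- Left options. -/
def lopts : WT → List WT
  | int _ => []
  | node L _ => L

/-- Right options. -/
def ropts : WT → List WT
  | int _ => []
  | node _ R => R

theorem sizeOf_lt_of_mem_lopts : ∀ {G g : WT}, g ∈ G.lopts → sizeOf g < sizeOf G := by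
  intro G g h
  cases G with
  | int n => simp [lopts] at h
  | node L R =>
    simp only [lopts] at h
    have h1 := List.sizeOf_lt_of_mem h
    have h2 : sizeOf (WT.node L R) = 1 + sizeOf L + sizeOf R := by simp
    omega

theorem sizeOf_lt_of_mem_ropts : ∀ {G g : WT}, g ∈ G.ropts → sizeOf g < sizeOf G := by
  intro G g h
  cases G with
  | int n => simp [ropts] at h
  | node L R =>
    simp only [ropts] at h
    have h1 := List.sizeOf_lt_of_mem h
    have h2 : sizeOf (WT.node L R) = 1 + sizeOf L + sizeOf R := by simp
    omega

/-- Disjunctive sum of two games. -/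
def add (G H : WT) : WT :=
  match G, H with
  | int m, int n => int (m + n)
  | G, H =>
    node ((G.lopts.attach.map fun g => add g.1 H) ++ (H.lopts.attach.map fun h => add G h.1))
         ((G.ropts.attach.map fun g => add g.1 H) ++ (H.ropts.attach.map fun h => add G h.1))
termination_by sizeOf G + sizeOf H
decreasing_by
  all_goals
    first
      | (have := sizeOf_lt_of_mem_lopts g.2; omega)
      | (have := sizeOf_lt_of_mem_lopts h.2; omega)
      | (have := sizeOf_lt_of_mem_ropts g.2; omega)
      | (have := sizeOf_lt_of_mem_ropts h.2; omega)

/-- Negation of a game: swap players and negate scores. -/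
def neg : WT → WT
  | int n => int (-n)
  | node L R =>
    node ((WT.node L R).ropts.attach.map fun g => neg g.1)
         ((WT.node L R).lopts.attach.map fun g => neg g.1)
termination_by G => sizeOf G
decreasing_by
  all_goals
    first
      | exact sizeOf_lt_of_mem_lopts g.2
      | exact sizeOf_lt_of_mem_ropts g.2

def lmax : List ℤ → ℤ
  | [] => 0
  | x :: xs => xs.foldl max x

def lmin : List ℤ → ℤ
  | [] => 0
  | x :: xs => xs.foldl min x

/-- The pair (left outcome, right outcome). -/
def out : WT → ℤ × ℤ
  | int n => (n, n)
  | node L R =>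
    (lmax ((WT.node L R).lopts.attach.map fun g => (out g.1).2),
     lmin ((WT.node L R).ropts.attach.map fun g => (out g.1).1))
termination_by G => sizeOf G
decreasing_by
  all_goals
    first
      | exact sizeOf_lt_of_mem_lopts g.2
      | exact sizeOf_lt_of_mem_ropts g.2

/-- Left outcome L(G): optimal score when Left moves first. -/
def Lout (G : WT) : ℤ := G.out.1

/-- Right outcome R(G): optimal score when Right moves first. -/
def Rout (G : WT) : ℤ := G.out.2

/-- `IsWT G p` : `G` is a well-tempered game of parity `p`
(`false` = even-tempered, `true` = odd-tempered). -/
inductive IsWT : WT → Bool → Prop where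
  | int (n : ℤ) : IsWT (WT.int n) false
  | node {L R : List WT} {p : Bool} (hL : L ≠ []) (hR : R ≠ [])
      (hLp : ∀ g ∈ L, IsWT g p) (hRp : ∀ g ∈ R, IsWT g p) :
      IsWT (WT.node L R) (!p)

/-- `G` is a well-tempered game (of some parity). -/
def Wt (G : WT) : Prop := ∃ p, IsWT G p

/-- Parity, computed structurally (`false` = even-tempered, `true` = odd-tempered;
agrees with `IsWT` on well-tempered games). -/
def par : WT → Bool
  | int _ => false
  | node [] _ => true
  | node (g :: _) _ => !(par g)

/-- Final score under optimal play when Left moves last. -/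
def Lf (G : WT) : ℤ := if G.par then G.Lout else G.Rout

/-- Final score under optimal play when Right moves last. -/
def Rf (G : WT) : ℤ := if G.par then G.Rout else G.Lout

/-- `G ≲ H` : for every well-tempered `X`, `L(G+X) ≤ L(H+X)` and `R(G+X) ≤ R(H+X)`. -/
def Le (G H : WT) : Prop :=
  ∀ X : WT, X.Wt → (G.add X).Lout ≤ (H.add X).Lout ∧ (G.add X).Rout ≤ (H.add X).Rout

/-- `G ≳ H`. -/
def Ge (G H : WT) : Prop := Le H G

/-- `G ≈ H` : equivalence of scoring games. -/
def Equiv (G H : WT) : Prop :=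
  ∀ X : WT, X.Wt → (G.add X).Lout = (H.add X).Lout ∧ (G.add X).Rout = (H.add X).Rout

/-- `G` and `H` are well-tempered with the same parity. -/
def SamePar (G H : WT) : Prop := ∃ p, IsWT G p ∧ IsWT H p

/-- `G` takes values in `S`: every integer subgame lies in `S`. -/
inductive Valued (S : Set ℤ) : WT → Prop where
  | int {n : ℤ} : n ∈ S → Valued S (WT.int n)
  | node {L R : List WT} : (∀ g ∈ L, Valued S g) → (∀ g ∈ R, Valued S g) →
      Valued S (WT.node L R)

/-- `Subgame H G` : `H` is a subgame of `G`. -/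
inductive Subgame : WT → WT → Prop where
  | refl (G : WT) : Subgame G G
  | left {H G' : WT} {L R : List WT} : G' ∈ L → Subgame H G' → Subgame H (WT.node L R)
  | right {H G' : WT} {L R : List WT} : G' ∈ R → Subgame H G' → Subgame H (WT.node L R)

/-- `gap G p` : supremum of `R(H) - L(H)` over subgames `H` of `G` of parity `p`
(as an element of `WithBot ℤ`; the supremum of the empty set is `⊥ = -∞`). -/
noncomputable def gap (G : WT) (p : Bool) : WithBot ℤ :=
  sSup {x : WithBot ℤ | ∃ H : WT, Subgame H G ∧ IsWT H p ∧ x = ((H.Rout - H.Lout : ℤ) : WithBot ℤ)}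

/-- Heating by `t`. -/
def heat (t : ℤ) : WT → WT
  | int n => int n
  | node L R =>
    node ((WT.node L R).lopts.attach.map fun g => (WT.int t).add (heat t g.1))
         ((WT.node L R).ropts.attach.map fun g => (WT.int (-t)).add (heat t g.1))
termination_by G => sizeOf G
decreasing_by
  all_goals
    first
      | exact sizeOf_lt_of_mem_lopts g.2
      | exact sizeOf_lt_of_mem_ropts g.2

end WT

/-!
The upside `G.up` rebuilds `G` from the upsides of its options and gives Left, at every
even-tempered position `C`, the extra option `star r = {r | r}` with `r = R(C)`. Then
`R(C) ≤ L(C)` at every even-tempered subgame, so `gap₀ = 0`, and more Left options can only help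
Left, so `G ≲ G.up`. The extra option never changes `Lf(C + Y)`: moving to `star r + Y` gives Left
at most `r + Lf(Y)`, while `Lf(C + Y) ≥ Lf(C) + Lf(Y) = r + Lf(Y)` because `Lf` is superadditive
unless both summands are odd-tempered. The downside is the mirror image `-((-G).up)`, since
negation turns `≈₊` into `≈₋` and reverses `≲`.
-/

open Pointwise

namespace WT

/-! ### Extrema of integer lists -/

theorem lmax_eq_max : ∀ {l : List ℤ} (hl : l ≠ []), lmax l = l.max hl
  | _ :: _, _ => rfl

theorem lmin_eq_min : ∀ {l : List ℤ} (hl : l ≠ []), lmin l = l.min hl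
  | _ :: _, _ => rfl

theorem lmax_mem {l : List ℤ} (hl : l ≠ []) : lmax l ∈ l :=
  lmax_eq_max hl ▸ List.max_mem hl

theorem lmin_mem {l : List ℤ} (hl : l ≠ []) : lmin l ∈ l :=
  lmin_eq_min hl ▸ List.min_mem hl

theorem le_lmax_of_mem {l : List ℤ} {a : ℤ} (ha : a ∈ l) : a ≤ lmax l :=
  lmax_eq_max (List.ne_nil_of_mem ha) ▸ List.le_max_of_mem ha

theorem lmin_le_of_mem {l : List ℤ} {a : ℤ} (ha : a ∈ l) : lmin l ≤ a :=
  lmin_eq_min (List.ne_nil_of_mem ha) ▸ List.min_le_of_mem ha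

theorem lmax_le_iff {l : List ℤ} (hl : l ≠ []) {b : ℤ} :
    lmax l ≤ b ↔ ∀ a ∈ l, a ≤ b :=
  lmax_eq_max hl ▸ List.max_le_iff hl

theorem le_lmin_iff {l : List ℤ} (hl : l ≠ []) {b : ℤ} :
    b ≤ lmin l ↔ ∀ a ∈ l, b ≤ a :=
  lmin_eq_min hl ▸ List.le_min_iff hl

theorem lmax_map_add {l : List ℤ} (hl : l ≠ []) (n : ℤ) :
    lmax (l.map (n + ·)) = n + lmax l := by
  refine le_antisymm ((lmax_le_iff (by simpa using hl)).2 ?_)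
    (le_lmax_of_mem (List.mem_map_of_mem (lmax_mem hl)))
  intro _ hb
  obtain ⟨a, ha, rfl⟩ := List.mem_map.1 hb
  exact add_le_add_right (le_lmax_of_mem ha) n

theorem lmin_map_add {l : List ℤ} (hl : l ≠ []) (n : ℤ) :
    lmin (l.map (n + ·)) = n + lmin l := by
  refine le_antisymm (lmin_le_of_mem (List.mem_map_of_mem (lmin_mem hl)))
    ((le_lmin_iff (by simpa using hl)).2 ?_)
  intro _ hb
  obtain ⟨a, ha, rfl⟩ := List.mem_map.1 hb
  exact add_le_add_right (lmin_le_of_mem ha) n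

theorem lmax_map_neg (l : List ℤ) : lmax (l.map (-·)) = -lmin l := by
  rcases eq_or_ne l [] with rfl | hl
  · rfl
  refine le_antisymm ((lmax_le_iff (by simpa using hl)).2 ?_)
    (le_lmax_of_mem (List.mem_map_of_mem (lmin_mem hl)))
  intro _ hb
  obtain ⟨a, ha, rfl⟩ := List.mem_map.1 hb
  exact neg_le_neg (lmin_le_of_mem ha)

theorem lmin_map_neg (l : List ℤ) : lmin (l.map (-·)) = -lmax l := by
  rcases eq_or_ne l [] with rfl | hl
  · rfl
  refine le_antisymm (lmin_le_of_mem (List.mem_map_of_mem (lmax_mem hl)))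
    ((le_lmin_iff (by simpa using hl)).2 ?_)
  intro _ hb
  obtain ⟨a, ha, rfl⟩ := List.mem_map.1 hb
  exact neg_le_neg (le_lmax_of_mem ha)

theorem moveRecOn {motive : WT → Prop} (G : WT)
    (ih : ∀ G, (∀ g ∈ G.lopts, motive g) → (∀ g ∈ G.ropts, motive g) → motive G) :
    motive G :=
  ih G (fun g _ => moveRecOn g ih) (fun g _ => moveRecOn g ih)
termination_by sizeOf G
decreasing_by
  · exact sizeOf_lt_of_mem_lopts ‹_›
  · exact sizeOf_lt_of_mem_ropts ‹_›

@[simp] theorem lopts_int (n : ℤ) : (int n).lopts = [] := rfl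
@[simp] theorem ropts_int (n : ℤ) : (int n).ropts = [] := rfl
@[simp] theorem lopts_node (L R : List WT) : (node L R).lopts = L := rfl
@[simp] theorem ropts_node (L R : List WT) : (node L R).ropts = R := rfl

theorem add_int_int (m n : ℤ) : (int m).add (int n) = int (m + n) := by
  rw [add]

theorem add_node_left (L R : List WT) (X : WT) :
    (node L R).add X = node (L.map (·.add X) ++ X.lopts.map (node L R).add)
      (R.map (·.add X) ++ X.ropts.map (node L R).add) := by
  rw [add]
  · simp
  · intro _ _ h; cases h

theorem add_node_right (G : WT) (L R : List WT) :
    G.add (node L R) = node (G.lopts.map (·.add (node L R)) ++ L.map G.add)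
      (G.ropts.map (·.add (node L R)) ++ R.map G.add) := by
  rw [add]
  · simp
  · intro _ _ _ h; cases h

theorem lopts_add (G X : WT) :
    (G.add X).lopts = G.lopts.map (·.add X) ++ X.lopts.map G.add := by
  rcases G with m | ⟨L, R⟩
  · rcases X with n | ⟨L', R'⟩
    · simp [add_int_int]
    · rw [add_node_right]; simp
  · simp [add_node_left]

theorem ropts_add (G X : WT) :
    (G.add X).ropts = G.ropts.map (·.add X) ++ X.ropts.map G.add := by
  rcases G with m | ⟨L, R⟩
  · rcases X with n | ⟨L', R'⟩
    · simp [add_int_int]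
    · rw [add_node_right]; simp
  · simp [add_node_left]

theorem add_mem_lopts_add_left {G g : WT} (X : WT) (hg : g ∈ G.lopts) :
    g.add X ∈ (G.add X).lopts := by
  rw [lopts_add]; exact List.mem_append_left _ (List.mem_map_of_mem hg)

theorem add_mem_lopts_add_right (G : WT) {X x : WT} (hx : x ∈ X.lopts) :
    G.add x ∈ (G.add X).lopts := by
  rw [lopts_add]; exact List.mem_append_right _ (List.mem_map_of_mem hx)

theorem add_mem_ropts_add_left {G g : WT} (X : WT) (hg : g ∈ G.ropts) :
    g.add X ∈ (G.add X).ropts := by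
  rw [ropts_add]; exact List.mem_append_left _ (List.mem_map_of_mem hg)

theorem add_mem_ropts_add_right (G : WT) {X x : WT} (hx : x ∈ X.ropts) :
    G.add x ∈ (G.add X).ropts := by
  rw [ropts_add]; exact List.mem_append_right _ (List.mem_map_of_mem hx)

theorem forall_mem_lopts_add {G X : WT} {P : WT → Prop} :
    (∀ a ∈ (G.add X).lopts, P a) ↔
      (∀ g ∈ G.lopts, P (g.add X)) ∧ ∀ x ∈ X.lopts, P (G.add x) := by
  simp [lopts_add, or_imp, forall_and]

theorem forall_mem_ropts_add {G X : WT} {P : WT → Prop} :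
    (∀ a ∈ (G.add X).ropts, P a) ↔
      (∀ g ∈ G.ropts, P (g.add X)) ∧ ∀ x ∈ X.ropts, P (G.add x) := by
  simp [ropts_add, or_imp, forall_and]

@[simp] theorem Lout_int (n : ℤ) : (int n).Lout = n := by simp [Lout, out]
@[simp] theorem Rout_int (n : ℤ) : (int n).Rout = n := by simp [Rout, out]

theorem Lout_node (L R : List WT) : (node L R).Lout = lmax (L.map Rout) := by
  rw [Lout, out]; simp only [lopts, List.map_subtype, List.unattach_attach]; rfl

theorem Rout_node (L R : List WT) : (node L R).Rout = lmin (R.map Lout) := by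
  rw [Rout, out]; simp only [ropts, List.map_subtype, List.unattach_attach]; rfl

theorem Rout_le_Lout_of_mem_lopts {G g : WT} (hg : g ∈ G.lopts) : g.Rout ≤ G.Lout := by
  cases G with
  | int => simp at hg
  | node L R => rw [Lout_node]; exact le_lmax_of_mem (List.mem_map_of_mem hg)

theorem Rout_le_Lout_of_mem_ropts {G g : WT} (hg : g ∈ G.ropts) : G.Rout ≤ g.Lout := by
  cases G with
  | int => simp at hg
  | node L R => rw [Rout_node]; exact lmin_le_of_mem (List.mem_map_of_mem hg)

theorem Lout_le_iff {G : WT} (hG : G.lopts ≠ []) {b : ℤ} :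
    G.Lout ≤ b ↔ ∀ g ∈ G.lopts, g.Rout ≤ b := by
  cases G with
  | int => simp at hG
  | node L R => simp [Lout_node, lmax_le_iff (l := L.map Rout) (by simpa using hG)]

theorem le_Rout_iff {G : WT} (hG : G.ropts ≠ []) {b : ℤ} :
    b ≤ G.Rout ↔ ∀ g ∈ G.ropts, b ≤ g.Lout := by
  cases G with
  | int => simp at hG
  | node L R => simp [Rout_node, le_lmin_iff (l := R.map Lout) (by simpa using hG)]

theorem exists_mem_lopts_Rout_eq {G : WT} (hG : G.lopts ≠ []) :
    ∃ g ∈ G.lopts, g.Rout = G.Lout := by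
  cases G with
  | int => simp at hG
  | node L R => simpa [Lout_node] using lmax_mem (l := L.map Rout) (by simpa using hG)

theorem exists_mem_ropts_Lout_eq {G : WT} (hG : G.ropts ≠ []) :
    ∃ g ∈ G.ropts, g.Lout = G.Rout := by
  cases G with
  | int => simp at hG
  | node L R => simpa [Rout_node] using lmin_mem (l := R.map Lout) (by simpa using hG)

theorem IsWT.node_inv {L R : List WT} {p : Bool} (h : IsWT (WT.node L R) p) :
    L ≠ [] ∧ R ≠ [] ∧ (∀ g ∈ L, IsWT g (!p)) ∧ ∀ g ∈ R, IsWT g (!p) := by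
  cases h with
  | node hL hR hLp hRp => simpa using ⟨hL, hR, hLp, hRp⟩

theorem IsWT.of_options {G : WT} {p : Bool} (hL : G.lopts ≠ []) (hR : G.ropts ≠ [])
    (hLp : ∀ g ∈ G.lopts, IsWT g (!p)) (hRp : ∀ g ∈ G.ropts, IsWT g (!p)) : IsWT G p := by
  cases G with
  | int => simp at hL
  | node L R => simpa using IsWT.node hL hR hLp hRp

theorem IsWT.of_mem_lopts {G g : WT} {p : Bool} (hG : IsWT G p) (hg : g ∈ G.lopts) :
    IsWT g (!p) := by
  cases G with
  | int => simp at hg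
  | node L R => exact hG.node_inv.2.2.1 g hg

theorem IsWT.of_mem_ropts {G g : WT} {p : Bool} (hG : IsWT G p) (hg : g ∈ G.ropts) :
    IsWT g (!p) := by
  cases G with
  | int => simp at hg
  | node L R => exact hG.node_inv.2.2.2 g hg

theorem IsWT.eq_int_or {G : WT} {p : Bool} (hG : IsWT G p) :
    (∃ n, G = WT.int n ∧ p = false) ∨ (G.lopts ≠ [] ∧ G.ropts ≠ []) := by
  cases G with
  | int n => cases hG; exact .inl ⟨n, rfl, rfl⟩
  | node L R => exact .inr ⟨hG.node_inv.1, hG.node_inv.2.1⟩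

theorem IsWT.lopts_ne_nil {G : WT} (hG : IsWT G true) : G.lopts ≠ [] := by
  obtain ⟨_, -, h⟩ | ⟨hL, -⟩ := hG.eq_int_or
  exacts [absurd h Bool.noConfusion, hL]

theorem IsWT.par_eq {G : WT} {p : Bool} (hG : IsWT G p) : G.par = p := by
  induction hG with
  | int n => rfl
  | @node L R q hL _ _ _ ihL _ =>
    cases L with
    | nil => exact absurd rfl hL
    | cons g gs => simp [par, ihL g List.mem_cons_self]

theorem IsWT.unique {G : WT} {p q : Bool} (hp : IsWT G p) (hq : IsWT G q) : p = q :=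
  hp.par_eq.symm.trans hq.par_eq

theorem IsWT.node_map {L R : List WT} {p : Bool} {f : WT → WT} (h : IsWT (WT.node L R) p)
    (hf : ∀ g ∈ L ++ R, IsWT g (!p) → IsWT (f g) (!p)) :
    IsWT (WT.node (L.map f) (R.map f)) p := by
  obtain ⟨hL, hR, hLp, hRp⟩ := h.node_inv
  refine IsWT.of_options (by simpa using hL) (by simpa using hR) ?_ ?_ <;>
    simp only [lopts_node, ropts_node, List.mem_map, forall_exists_index, and_imp,
      forall_apply_eq_imp_iff₂]
  · exact fun g hg => hf g (List.mem_append_left _ hg) (hLp g hg)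
  · exact fun g hg => hf g (List.mem_append_right _ hg) (hRp g hg)

theorem IsWT.add {G X : WT} {p q : Bool} (hG : IsWT G p) (hX : IsWT X q) :
    IsWT (G.add X) (xor p q) := by
  induction G using moveRecOn generalizing p X q with | ih G ihGl ihGr =>
  induction X using moveRecOn generalizing q with | ih X ihXl ihXr =>
  rcases hG.eq_int_or with ⟨m, rfl, rfl⟩ | ⟨hGl, hGr⟩
  · rcases hX.eq_int_or with ⟨n, rfl, rfl⟩ | ⟨hXl, hXr⟩
    · simpa [add_int_int] using IsWT.int (m + n)
    refine IsWT.of_options (by simp [lopts_add, hXl]) (by simp [ropts_add, hXr]) ?_ ?_ <;>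
      simp only [forall_mem_lopts_add, forall_mem_ropts_add, lopts_int, ropts_int] <;>
      refine ⟨by simp, fun x hx => ?_⟩
    · simpa using ihXl x hx (hX.of_mem_lopts hx)
    · simpa using ihXr x hx (hX.of_mem_ropts hx)
  refine IsWT.of_options (by simp [lopts_add, hGl]) (by simp [ropts_add, hGr]) ?_ ?_ <;>
    simp only [forall_mem_lopts_add, forall_mem_ropts_add] <;>
    refine ⟨fun g hg => ?_, fun x hx => ?_⟩
  · simpa using ihGl g hg (hG.of_mem_lopts hg) hX
  · simpa using ihXl x hx (hX.of_mem_lopts hx)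
  · simpa using ihGr g hg (hG.of_mem_ropts hg) hX
  · simpa using ihXr x hx (hX.of_mem_ropts hx)

/-! ### Negation -/

theorem add_eq_node {G X : WT} (h : ¬∃ m n, G = int m ∧ X = int n) :
    G.add X = node (G.add X).lopts (G.add X).ropts := by
  rcases G with m | ⟨L, R⟩
  · rcases X with n | ⟨L', R'⟩
    · simp at h
    · rw [add_node_right]; rfl
  · rw [add_node_left]; rfl

@[simp] theorem neg_int (n : ℤ) : (int n).neg = int (-n) := by
  rw [neg]

@[simp] theorem neg_node (L R : List WT) : (node L R).neg = node (R.map neg) (L.map neg) := by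
  rw [neg]; simp

@[simp] theorem lopts_neg (G : WT) : G.neg.lopts = G.ropts.map neg := by
  cases G <;> simp

@[simp] theorem ropts_neg (G : WT) : G.neg.ropts = G.lopts.map neg := by
  cases G <;> simp

@[simp] theorem neg_neg (G : WT) : G.neg.neg = G := by
  induction G using moveRecOn with | ih G ihl ihr =>
  cases G with
  | int n => simp
  | node L R =>
    simp only [neg_node, List.map_map, node.injEq]
    exact ⟨(List.map_congr_left ihl).trans (List.map_id L),
      (List.map_congr_left ihr).trans (List.map_id R)⟩

theorem neg_add (G X : WT) : (G.add X).neg = G.neg.add X.neg := by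
  induction G using moveRecOn generalizing X with | ih G ihGl ihGr =>
  induction X using moveRecOn with | ih X ihXl ihXr =>
  by_cases h : ∃ m n, G = int m ∧ X = int n
  · obtain ⟨m, n, rfl, rfl⟩ := h
    simp [add_int_int, add_comm]
  have h' : ¬∃ m n, G.neg = int m ∧ X.neg = int n := by
    rintro ⟨m, n, hm, hn⟩
    exact h ⟨-m, -n, by simpa using congrArg neg hm, by simpa using congrArg neg hn⟩
  rw [add_eq_node h, add_eq_node h', neg_node]
  simp only [lopts_add, ropts_add, lopts_neg, ropts_neg, List.map_append, List.map_map,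
    node.injEq]
  exact ⟨congrArg₂ _ (List.map_congr_left fun g hg => ihGr g hg X)
      (List.map_congr_left fun x hx => ihXr x hx),
    congrArg₂ _ (List.map_congr_left fun g hg => ihGl g hg X)
      (List.map_congr_left fun x hx => ihXl x hx)⟩

theorem neg_add_eq_neg (G X : WT) : G.neg.add X = (G.add X.neg).neg := by
  rw [neg_add, neg_neg]

theorem IsWT.neg {G : WT} {p : Bool} (hG : IsWT G p) : IsWT G.neg p := by
  induction hG with
  | int n => simpa using IsWT.int (-n)
  | node hL hR _ _ ihL ihR =>
    refine IsWT.of_options (by simpa using hR) (by simpa using hL) ?_ ?_ <;> simpa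

theorem out_neg (G : WT) : G.neg.out = (-G.Rout, -G.Lout) := by
  induction G using moveRecOn with | ih G ihl ihr =>
  cases G with
  | int n => simp [out]
  | node L R =>
    refine Prod.ext ?_ ?_
    · change Lout _ = -Rout _
      rw [neg_node, Lout_node, Rout_node, ← lmax_map_neg, List.map_map, List.map_map]
      exact congrArg lmax (List.map_congr_left fun g hg => congrArg Prod.snd (ihr g hg))
    · change Rout _ = -Lout _
      rw [neg_node, Lout_node, Rout_node, ← lmin_map_neg, List.map_map, List.map_map]
      exact congrArg lmin (List.map_congr_left fun g hg => congrArg Prod.fst (ihl g hg))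

theorem Lout_neg (G : WT) : G.neg.Lout = -G.Rout := congrArg Prod.fst (out_neg G)

theorem Rout_neg (G : WT) : G.neg.Rout = -G.Lout := congrArg Prod.snd (out_neg G)

theorem Rf_neg {G : WT} {p : Bool} (hG : IsWT G p) : G.neg.Rf = -G.Lf := by
  cases p <;> simp [Rf, Lf, hG.neg.par_eq, hG.par_eq, Lout_neg, Rout_neg]

/-! ### Final scores -/

@[simp] theorem Lf_int (n : ℤ) : (int n).Lf = n := by
  simp [Lf, par]

theorem Lf_of_odd {G : WT} (hG : IsWT G true) : G.Lf = G.Lout := by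
  simp [Lf, hG.par_eq]

theorem Lf_of_even {G : WT} (hG : IsWT G false) : G.Lf = G.Rout := by
  simp [Lf, hG.par_eq]

theorem out_int_add (n : ℤ) {X : WT} {q : Bool} (hX : IsWT X q) :
    ((int n).add X).out = (n + X.Lout, n + X.Rout) := by
  induction hX with
  | int m => simp [add_int_int, out]
  | @node L R q hL hR _ _ ihL ihR =>
    rw [add_node_right]
    simp only [lopts_int, ropts_int, List.map_nil, List.nil_append]
    refine Prod.ext ?_ ?_
    · change Lout _ = n + Lout _
      rw [Lout_node, Lout_node, ← lmax_map_add (by simpa using hL), List.map_map,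
        List.map_map]
      exact congrArg lmax (List.map_congr_left fun g hg => congrArg Prod.snd (ihL g hg))
    · change Rout _ = n + Rout _
      rw [Rout_node, Rout_node, ← lmin_map_add (by simpa using hR), List.map_map,
        List.map_map]
      exact congrArg lmin (List.map_congr_left fun g hg => congrArg Prod.fst (ihR g hg))

theorem Lf_int_add (n : ℤ) {X : WT} {q : Bool} (hX : IsWT X q) :
    ((int n).add X).Lf = n + X.Lf := by
  have hs := (IsWT.int n).add hX
  cases q <;> simp_all [Lf, Lout, Rout, out_int_add n hX, hs.par_eq, hX.par_eq]

theorem Lf_le_of_mem_lopts {G g : WT} (hG : IsWT G true) (hg : g ∈ G.lopts) :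
    g.Lf ≤ G.Lf := by
  rw [Lf_of_odd hG, Lf_of_even (hG.of_mem_lopts hg)]
  exact Rout_le_Lout_of_mem_lopts hg

theorem Lf_le_of_mem_ropts {G g : WT} (hG : IsWT G false) (hg : g ∈ G.ropts) :
    G.Lf ≤ g.Lf := by
  rw [Lf_of_even hG, Lf_of_odd (hG.of_mem_ropts hg)]
  exact Rout_le_Lout_of_mem_ropts hg

theorem Lf_le_iff_of_odd {G : WT} (hG : IsWT G true) {b : ℤ} :
    G.Lf ≤ b ↔ ∀ g ∈ G.lopts, g.Lf ≤ b := by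
  rw [Lf_of_odd hG, Lout_le_iff hG.lopts_ne_nil]
  exact forall₂_congr fun g hg => by rw [Lf_of_even (hG.of_mem_lopts hg)]

theorem le_Lf_iff_of_even {G : WT} (hG : IsWT G false) (hR : G.ropts ≠ []) {b : ℤ} :
    b ≤ G.Lf ↔ ∀ g ∈ G.ropts, b ≤ g.Lf := by
  rw [Lf_of_even hG, le_Rout_iff hR]
  exact forall₂_congr fun g hg => by rw [Lf_of_odd (hG.of_mem_ropts hg)]

theorem exists_mem_lopts_Lf_eq {G : WT} (hG : IsWT G true) : ∃ g ∈ G.lopts, g.Lf = G.Lf := by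
  obtain ⟨g, hg, h⟩ := exists_mem_lopts_Rout_eq hG.lopts_ne_nil
  exact ⟨g, hg, by rw [Lf_of_even (hG.of_mem_lopts hg), Lf_of_odd hG, h]⟩

theorem Lf_eq_lmax_of_odd {G : WT} (hG : IsWT G true) : G.Lf = lmax (G.lopts.map Lf) :=
  le_antisymm ((Lf_le_iff_of_odd hG).2 fun _ hg => le_lmax_of_mem (List.mem_map_of_mem hg))
    ((lmax_le_iff (by simpa using hG.lopts_ne_nil)).2 fun _ ha => by
      obtain ⟨g, hg, rfl⟩ := List.mem_map.1 ha
      exact Lf_le_of_mem_lopts hG hg)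

theorem Lf_eq_lmin_of_even {G : WT} (hG : IsWT G false) (hR : G.ropts ≠ []) :
    G.Lf = lmin (G.ropts.map Lf) :=
  le_antisymm ((le_lmin_iff (by simpa using hR)).2 fun _ ha => by
      obtain ⟨g, hg, rfl⟩ := List.mem_map.1 ha
      exact Lf_le_of_mem_ropts hG hg)
    ((le_Lf_iff_of_even hG hR).2 fun _ hg => lmin_le_of_mem (List.mem_map_of_mem hg))

theorem Lf_add_Lf_le_Lf_add {G X : WT} {p q : Bool} (hG : IsWT G p) (hX : IsWT X q)
    (hpq : p = false ∨ q = false) : G.Lf + X.Lf ≤ (G.add X).Lf := by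
  induction G using moveRecOn generalizing p X q with | ih G ihGl ihGr =>
  induction X using moveRecOn generalizing q with | ih X ihXl ihXr =>
  have hs := hG.add hX
  cases p <;> cases q
  · obtain ⟨m, rfl, -⟩ | ⟨-, hGr⟩ := hG.eq_int_or
    · rw [Lf_int_add m hX, Lf_int]
    rw [le_Lf_iff_of_even hs (by simp [ropts_add, hGr]), forall_mem_ropts_add]
    refine ⟨fun g hg => ?_, fun x hx => ?_⟩
    · have := Lf_le_of_mem_ropts hG hg
      have := ihGr g hg (hG.of_mem_ropts hg) hX (.inr rfl)
      omega
    · have := Lf_le_of_mem_ropts hX hx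
      have := ihXr x hx (hX.of_mem_ropts hx) (.inl rfl)
      omega
  · obtain ⟨x, hx, hxX⟩ := exists_mem_lopts_Lf_eq hX
    calc G.Lf + X.Lf = G.Lf + x.Lf := by rw [hxX]
      _ ≤ (G.add x).Lf := ihXl x hx (hX.of_mem_lopts hx) (.inl rfl)
      _ ≤ (G.add X).Lf := Lf_le_of_mem_lopts hs (add_mem_lopts_add_right G hx)
  · obtain ⟨g, hg, hgG⟩ := exists_mem_lopts_Lf_eq hG
    calc G.Lf + X.Lf = g.Lf + X.Lf := by rw [hgG]
      _ ≤ (g.add X).Lf := ihGl g hg (hG.of_mem_lopts hg) hX (.inr rfl)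
      _ ≤ (G.add X).Lf := Lf_le_of_mem_lopts hs (add_mem_lopts_add_left X hg)
  · simp at hpq

/-! ### The upside -/

def star (r : ℤ) : WT := node [int r] [int r]

theorem isWT_star (r : ℤ) : IsWT (star r) true :=
  IsWT.of_options (by simp [star]) (by simp [star]) (by simpa [star] using IsWT.int r)
    (by simpa [star] using IsWT.int r)

@[simp] theorem Rout_star (r : ℤ) : (star r).Rout = r := by
  simp [star, Rout_node, lmin]

theorem Lf_star_add_le {Y : WT} (hY : IsWT Y true) (r : ℤ) : ((star r).add Y).Lf ≤ r + Y.Lf :=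
  Lf_int_add r hY ▸ Lf_le_of_mem_ropts ((isWT_star r).add hY)
    (add_mem_ropts_add_left Y (by simp [star]))

def withLeftStar (L R : List WT) : WT := node (L ++ [star (node L R).Rout]) R

theorem IsWT.withLeftStar {L R : List WT} (h : IsWT (WT.node L R) false) :
    IsWT (WT.withLeftStar L R) false := by
  obtain ⟨hL, hR, hLp, hRp⟩ := h.node_inv
  refine IsWT.of_options (by simp [WT.withLeftStar]) hR ?_ hRp
  simpa [WT.withLeftStar, or_imp, forall_and] using ⟨hLp, isWT_star _⟩

theorem Rout_le_Lout_withLeftStar (L R : List WT) :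
    (withLeftStar L R).Rout ≤ (withLeftStar L R).Lout :=
  calc (withLeftStar L R).Rout = (star (node L R).Rout).Rout := by
        simp [withLeftStar, Rout_node]
    _ ≤ _ := Rout_le_Lout_of_mem_lopts (by simp [withLeftStar])

def PlusEquiv (G H : WT) : Prop := SamePar G H ∧ ∀ X : WT, X.Wt → (G.add X).Lf = (H.add X).Lf

def MinusEquiv (G H : WT) : Prop := SamePar G H ∧ ∀ X : WT, X.Wt → (G.add X).Rf = (H.add X).Rf

local infix:50 " ≈₊ " => PlusEquiv

local infix:50 " ≈₋ " => MinusEquiv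

theorem PlusEquiv.refl {G : WT} {p : Bool} (hG : IsWT G p) : G ≈₊ G :=
  ⟨⟨p, hG, hG⟩, fun _ _ => rfl⟩

theorem PlusEquiv.trans {G H K : WT} (h₁ : G ≈₊ H) (h₂ : H ≈₊ K) : G ≈₊ K := by
  obtain ⟨⟨p, hG, hH⟩, e₁⟩ := h₁
  obtain ⟨⟨q, hH', hK⟩, e₂⟩ := h₂
  exact ⟨⟨p, hG, hH.unique hH' ▸ hK⟩, fun X hX => (e₁ X hX).trans (e₂ X hX)⟩

theorem PlusEquiv.isWT {G H : WT} {p : Bool} (h : G ≈₊ H) (hG : IsWT G p) : IsWT H p := by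
  obtain ⟨⟨q, hG', hH⟩, -⟩ := h
  exact hG'.unique hG ▸ hH

theorem plusEquiv_withLeftStar {L R : List WT} (hC : IsWT (node L R) false) :
    node L R ≈₊ withLeftStar L R := by
  have hC' := hC.withLeftStar
  refine ⟨⟨false, hC, hC'⟩, fun Y hY => ?_⟩
  obtain ⟨q, hY⟩ := hY
  induction Y using moveRecOn generalizing q with | ih Y ihl ihr =>
  have hs := hC.add hY
  have hs' := hC'.add hY
  cases q
  · have hR : ((node L R).add Y).ropts ≠ [] := by simp [ropts_add, hC.node_inv.2.1]
    have hR' : ((withLeftStar L R).add Y).ropts ≠ [] := by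
      simp [ropts_add, withLeftStar, hC.node_inv.2.1]
    refine le_antisymm ((le_Lf_iff_of_even hs' hR').2 ?_) ((le_Lf_iff_of_even hs hR).2 ?_) <;>
      rw [forall_mem_ropts_add] <;> refine ⟨fun g hg => ?_, fun y hy => ?_⟩
    · exact Lf_le_of_mem_ropts hs (add_mem_ropts_add_left Y hg)
    · rw [← ihr y hy _ (hY.of_mem_ropts hy)]
      exact Lf_le_of_mem_ropts hs (add_mem_ropts_add_right _ hy)
    · exact Lf_le_of_mem_ropts hs' (add_mem_ropts_add_left Y hg)
    · rw [ihr y hy _ (hY.of_mem_ropts hy)]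
      exact Lf_le_of_mem_ropts hs' (add_mem_ropts_add_right _ hy)
  · refine le_antisymm ((Lf_le_iff_of_odd hs).2 ?_) ((Lf_le_iff_of_odd hs').2 ?_) <;>
      rw [forall_mem_lopts_add] <;> refine ⟨fun g hg => ?_, fun y hy => ?_⟩
    · exact Lf_le_of_mem_lopts hs' (add_mem_lopts_add_left Y (List.mem_append_left _ hg))
    · rw [ihl y hy _ (hY.of_mem_lopts hy)]
      exact Lf_le_of_mem_lopts hs' (add_mem_lopts_add_right _ hy)
    · rcases List.mem_append.1 hg with hg | hg
      · exact Lf_le_of_mem_lopts hs (add_mem_lopts_add_left Y hg)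
      obtain rfl := List.mem_singleton.1 hg
      calc ((star _).add Y).Lf ≤ (node L R).Rout + Y.Lf := Lf_star_add_le hY _
        _ = (node L R).Lf + Y.Lf := by rw [Lf_of_even hC]
        _ ≤ _ := Lf_add_Lf_le_Lf_add hC hY (.inl rfl)
    · rw [← ihl y hy _ (hY.of_mem_lopts hy)]
      exact Lf_le_of_mem_lopts hs (add_mem_lopts_add_right _ hy)

theorem PlusEquiv.node_map {L R : List WT} {p : Bool} {f : WT → WT} (h : IsWT (node L R) p)
    (hf : ∀ g ∈ L ++ R, g ≈₊ f g) : node L R ≈₊ node (L.map f) (R.map f) := by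
  have h' := h.node_map fun g hg hg' => (hf g hg).isWT hg'
  refine ⟨⟨p, h, h'⟩, fun X hX => ?_⟩
  obtain ⟨q, hX⟩ := hX
  induction X using moveRecOn generalizing q with | ih X ihl ihr =>
  have hfX : ∀ g ∈ L ++ R, (g.add X).Lf = ((f g).add X).Lf := fun g hg =>
    (hf g hg).2 X ⟨q, hX⟩
  have hs := h.add hX
  have hs' := h'.add hX
  cases hpq : xor p q <;> rw [hpq] at hs hs'
  · have hR := h.node_inv.2.1
    rw [Lf_eq_lmin_of_even hs (by simp [ropts_add, hR]),
      Lf_eq_lmin_of_even hs' (by simp [ropts_add, hR]), ropts_add, ropts_add]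
    simp only [ropts_node, List.map_append, List.map_map]
    congr 2
    · exact List.map_congr_left fun g hg => hfX g (List.mem_append_right _ hg)
    · exact List.map_congr_left fun x hx => ihr x hx _ (hX.of_mem_ropts hx)
  · rw [Lf_eq_lmax_of_odd hs, Lf_eq_lmax_of_odd hs', lopts_add, lopts_add]
    simp only [lopts_node, List.map_append, List.map_map]
    congr 2
    · exact List.map_congr_left fun g hg => hfX g (List.mem_append_left _ hg)
    · exact List.map_congr_left fun x hx => ihl x hx _ (hX.of_mem_lopts hx)

theorem PlusEquiv.neg {G H : WT} (h : G ≈₊ H) : G.neg ≈₋ H.neg := by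
  obtain ⟨⟨p, hG, hH⟩, e⟩ := h
  refine ⟨⟨p, hG.neg, hH.neg⟩, fun X ⟨q, hX⟩ => ?_⟩
  rw [neg_add_eq_neg, neg_add_eq_neg, Rf_neg (hG.add hX.neg), Rf_neg (hH.add hX.neg),
    e X.neg ⟨q, hX.neg⟩]

theorem Le.refl (G : WT) : Le G G := fun _ _ => ⟨le_rfl, le_rfl⟩

theorem Le.trans {G H K : WT} (h₁ : Le G H) (h₂ : Le H K) : Le G K := fun X hX =>
  ⟨(h₁ X hX).1.trans (h₂ X hX).1, (h₁ X hX).2.trans (h₂ X hX).2⟩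

theorem Le.neg {G H : WT} (h : Le G H) : Le H.neg G.neg := by
  rintro X ⟨q, hX⟩
  obtain ⟨hL, hR⟩ := h X.neg ⟨q, hX.neg⟩
  rw [neg_add_eq_neg, neg_add_eq_neg, Lout_neg, Lout_neg, Rout_neg, Rout_neg]
  exact ⟨neg_le_neg hR, neg_le_neg hL⟩

theorem le_of_options {G G' : WT} (hG : G.lopts ≠ []) (hG' : G'.ropts ≠ [])
    (hl : ∀ g ∈ G.lopts, ∃ g' ∈ G'.lopts, Le g g')
    (hr : ∀ g' ∈ G'.ropts, ∃ g ∈ G.ropts, Le g g') : Le G G' := by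
  rintro X ⟨q, hX⟩
  induction X using moveRecOn generalizing q with | ih X ihl ihr =>
  constructor
  · rw [Lout_le_iff (by simp [lopts_add, hG]), forall_mem_lopts_add]
    refine ⟨fun g hg => ?_, fun x hx => ?_⟩
    · obtain ⟨g', hg', hle⟩ := hl g hg
      exact (hle X ⟨q, hX⟩).2.trans (Rout_le_Lout_of_mem_lopts (add_mem_lopts_add_left X hg'))
    · exact (ihl x hx _ (hX.of_mem_lopts hx)).2.trans
        (Rout_le_Lout_of_mem_lopts (add_mem_lopts_add_right G' hx))
  · rw [le_Rout_iff (by simp [ropts_add, hG']), forall_mem_ropts_add]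
    refine ⟨fun g' hg' => ?_, fun x hx => ?_⟩
    · obtain ⟨g, hg, hle⟩ := hr g' hg'
      exact (Rout_le_Lout_of_mem_ropts (add_mem_ropts_add_left X hg)).trans (hle X ⟨q, hX⟩).1
    · exact (Rout_le_Lout_of_mem_ropts (add_mem_ropts_add_right G hx)).trans
        (ihr x hx _ (hX.of_mem_ropts hx)).1

def up : WT → WT
  | int n => int n
  | node L R =>
    if (node L R).par then node (L.map up) (R.map up) else withLeftStar (L.map up) (R.map up)

@[simp] theorem up_int (n : ℤ) : (int n).up = int n := by
  rw [up]

theorem up_node {L R : List WT} {p : Bool} (h : IsWT (node L R) p) :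
    (node L R).up =
      if p then node (L.map up) (R.map up) else withLeftStar (L.map up) (R.map up) := by
  rw [up, h.par_eq]

theorem ropts_up (G : WT) : G.up.ropts = G.ropts.map up := by
  cases G with
  | int n => simp
  | node L R => rw [up]; split <;> rfl

theorem up_mem_lopts_up {G g : WT} (hg : g ∈ G.lopts) : g.up ∈ G.up.lopts := by
  cases G with
  | int n => simp at hg
  | node L R =>
    rw [up]
    split
    · exact List.mem_map_of_mem hg
    · exact List.mem_append_left _ (List.mem_map_of_mem hg)

theorem IsWT.up {G : WT} {p : Bool} (hG : IsWT G p) : IsWT G.up p := by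
  induction hG with
  | int n => simpa using IsWT.int n
  | @node L R p hL hR hLp hRp ihL ihR =>
    have h := IsWT.node hL hR hLp hRp
    have hC := h.node_map (f := WT.up) fun g hg _ => by
      simpa using (List.mem_append.1 hg).elim (ihL g) (ihR g)
    rw [up_node h]
    cases p
    · simpa using hC
    · simpa using hC.withLeftStar

theorem plusEquiv_up {G : WT} {p : Bool} (hG : IsWT G p) : G ≈₊ G.up := by
  induction hG with
  | int n => simpa using PlusEquiv.refl (IsWT.int n)
  | @node L R p hL hR hLp hRp ihL ihR =>
    have h := IsWT.node hL hR hLp hRp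
    have hC := PlusEquiv.node_map h (f := up) fun g hg =>
      (List.mem_append.1 hg).elim (ihL g) (ihR g)
    rw [up_node h]
    cases p
    · simpa using hC
    · simpa using hC.trans (plusEquiv_withLeftStar (by simpa using hC.isWT h))

theorem le_up {G : WT} {p : Bool} (hG : IsWT G p) : Le G G.up := by
  induction hG with
  | int n => simpa using Le.refl (int n)
  | node hL hR _ _ ihL ihR =>
    refine le_of_options (by simpa using hL) (by simpa [ropts_up] using hR)
      (fun g hg => ⟨g.up, up_mem_lopts_up hg, ihL g hg⟩) ?_
    simpa [ropts_up] using fun g hg => ⟨g, hg, ihR g hg⟩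

def GapNonpos (G : WT) : Prop := ∀ H, Subgame H G → IsWT H false → H.Rout ≤ H.Lout

theorem GapNonpos.node {L R : List WT}
    (hroot : IsWT (WT.node L R) false → (WT.node L R).Rout ≤ (WT.node L R).Lout)
    (hopts : ∀ g ∈ L ++ R, GapNonpos g) : GapNonpos (WT.node L R) := by
  intro H hH hHe
  cases hH with
  | refl => exact hroot hHe
  | left hg hH => exact hopts _ (List.mem_append_left _ hg) H hH hHe
  | right hg hH => exact hopts _ (List.mem_append_right _ hg) H hH hHe

theorem gapNonpos_int (n : ℤ) : GapNonpos (int n) := by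
  intro H hH _
  cases hH
  simp

theorem gapNonpos_star (r : ℤ) : GapNonpos (star r) :=
  GapNonpos.node (fun h => absurd ((isWT_star r).unique h) (by decide))
    (by simp [gapNonpos_int])

theorem gapNonpos_up {G : WT} {p : Bool} (hG : IsWT G p) : GapNonpos G.up := by
  induction hG with
  | int n => simpa using gapNonpos_int n
  | @node L R p hL hR hLp hRp ihL ihR =>
    have h := IsWT.node hL hR hLp hRp
    have hup := h.up
    have hopts : ∀ g ∈ L.map up ++ R.map up, GapNonpos g := by
      simpa [or_imp, forall_and] using ⟨ihL, ihR⟩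
    rw [up_node h] at hup ⊢
    cases p
    · simp only [Bool.not_false, if_true] at hup ⊢
      exact GapNonpos.node (fun h' => absurd (hup.unique h') (by decide)) hopts
    · simp only [Bool.not_true] at hup ⊢
      refine GapNonpos.node (fun _ => Rout_le_Lout_withLeftStar _ _) ?_
      simpa [or_imp, forall_and, gapNonpos_star] using hopts

theorem Subgame.neg {G H : WT} (h : Subgame H G) : Subgame H.neg G.neg := by
  induction h with
  | refl => exact .refl _
  | left hg _ ih => rw [neg_node]; exact .right (List.mem_map_of_mem hg) ih
  | right hg _ ih => rw [neg_node]; exact .left (List.mem_map_of_mem hg) ih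

theorem GapNonpos.neg {G : WT} (h : GapNonpos G) : GapNonpos G.neg := by
  intro H hH hHe
  have := h H.neg (by simpa using hH.neg) hHe.neg
  rw [Lout_neg, Rout_neg] at this
  exact neg_le_neg_iff.1 this

theorem IsWT.exists_int_subgame {G : WT} {p : Bool} (hG : IsWT G p) :
    ∃ n, Subgame (WT.int n) G := by
  induction hG with
  | int n => exact ⟨n, .refl _⟩
  | node hL _ _ _ ihL _ =>
    obtain ⟨g, hg⟩ := List.exists_mem_of_ne_nil _ hL
    obtain ⟨n, hn⟩ := ihL g hg
    exact ⟨n, .left hg hn⟩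

theorem GapNonpos.gap_eq_zero {G : WT} {p : Bool} (h : GapNonpos G) (hG : IsWT G p) :
    G.gap false = ((0 : ℤ) : WithBot ℤ) := by
  refine IsGreatest.csSup_eq ⟨?_, ?_⟩
  · obtain ⟨n, hn⟩ := hG.exists_int_subgame
    exact ⟨int n, hn, .int n, by simp⟩
  · rintro _ ⟨H, hH, hHe, rfl⟩
    exact_mod_cast sub_nonpos.2 (h H hH hHe)

theorem Valued.node_inv {S : Set ℤ} {L R : List WT} (h : Valued S (WT.node L R)) :
    ∀ g ∈ L ++ R, Valued S g := by
  cases h with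
  | node hL hR => simpa [or_imp, forall_and] using ⟨hL, hR⟩

theorem Valued.out_mem {S : Set ℤ} {G : WT} {p : Bool} (hS : Valued S G) (hG : IsWT G p) :
    G.Lout ∈ S ∧ G.Rout ∈ S := by
  induction hG with
  | int n => cases hS; simpa
  | node hL hR _ _ ihL ihR =>
    have hSopts := hS.node_inv
    obtain ⟨g, hg, hgL⟩ := exists_mem_lopts_Rout_eq (G := WT.node _ _) hL
    obtain ⟨g', hg', hgR⟩ := exists_mem_ropts_Lout_eq (G := WT.node _ _) hR
    exact ⟨hgL ▸ (ihL g hg (hSopts g (List.mem_append_left _ hg))).2,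
      hgR ▸ (ihR g' hg' (hSopts g' (List.mem_append_right _ hg'))).1⟩

theorem Valued.star {S : Set ℤ} {r : ℤ} (h : r ∈ S) : Valued S (star r) :=
  .node (by simpa using Valued.int h) (by simpa using Valued.int h)

theorem Valued.up {S : Set ℤ} {G : WT} {p : Bool} (hS : Valued S G) (hG : IsWT G p) :
    Valued S G.up := by
  induction hG with
  | int n => simpa using hS
  | @node L R p hL hR hLp hRp ihL ihR =>
    have h := IsWT.node hL hR hLp hRp
    have hSopts := hS.node_inv
    have hC : Valued S (WT.node (L.map WT.up) (R.map WT.up)) := .node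
      (by simpa using fun g hg => ihL g hg (hSopts g (List.mem_append_left _ hg)))
      (by simpa using fun g hg => ihR g hg (hSopts g (List.mem_append_right _ hg)))
    rw [up_node h]
    cases p
    · simpa using hC
    · have hr := (hC.out_mem (h.node_map fun _ _ hg => hg.up)).2
      cases hC with
      | node hCL hCR =>
        refine .node (fun g hg => ?_) hCR
        rcases List.mem_append.1 hg with hg | hg
        · exact hCL g hg
        · exact List.mem_singleton.1 hg ▸ Valued.star hr

theorem Valued.neg {S : Set ℤ} {G : WT} (hS : Valued S G) : Valued (-S) G.neg := by
  induction hS with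
  | int h => simpa using Valued.int (Set.neg_mem_neg.2 h)
  | node _ _ ihL ihR => rw [neg_node]; exact .node (by simpa using ihR) (by simpa using ihL)

/-! ### The downside -/

def down (G : WT) : WT := G.neg.up.neg

theorem IsWT.down {G : WT} {p : Bool} (hG : IsWT G p) : IsWT G.down p :=
  hG.neg.up.neg

theorem gapNonpos_down {G : WT} {p : Bool} (hG : IsWT G p) : GapNonpos G.down :=
  (gapNonpos_up hG.neg).neg

theorem Valued.down {S : Set ℤ} {G : WT} {p : Bool} (hS : Valued S G) (hG : IsWT G p) :
    Valued S G.down := by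
  simpa [WT.down] using (hS.neg.up hG.neg).neg

theorem minusEquiv_down {G : WT} {p : Bool} (hG : IsWT G p) : G ≈₋ G.down := by
  simpa [down] using (plusEquiv_up hG.neg).neg

theorem down_le {G : WT} {p : Bool} (hG : IsWT G p) : Le G.down G := by
  simpa [down] using (le_up hG.neg).neg

end WT

/-- every well-tempered game G has an upside G⁺ and a downside G⁻ in I
(gap₀ = 0), with G ≈₊ G⁺, G ≈₋ G⁻, G⁺ ≳ G⁻, and G⁺, G⁻ S-valued whenever G is. -/
theorem upside_downside (G : WT) (p : Bool) (hG : WT.IsWT G p) (S : Set ℤ) (hS : G.Valued S) :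
    ∃ Gp Gm : WT,
      WT.IsWT Gp p ∧ WT.IsWT Gm p ∧
      Gp.gap false = ((0 : ℤ) : WithBot ℤ) ∧ Gm.gap false = ((0 : ℤ) : WithBot ℤ) ∧
      Gp.Valued S ∧ Gm.Valued S ∧
      (∀ X : WT, X.Wt → (G.add X).Lf = (Gp.add X).Lf) ∧
      (∀ X : WT, X.Wt → (G.add X).Rf = (Gm.add X).Rf) ∧
      WT.Ge Gp Gm :=
  ⟨G.up, G.down, hG.up, hG.down, (WT.gapNonpos_up hG).gap_eq_zero hG.up,
    (WT.gapNonpos_down hG).gap_eq_zero hG.down, hS.up hG, hS.down hG, (WT.plusEquiv_up hG).2,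
    (WT.minusEquiv_down hG).2, (WT.down_le hG).trans (WT.le_up hG)⟩
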